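/- arXiv:0811.4506 — 3 statements merged into one kernel-verified Lean document; each statement's English description precedes it below -/
import Mathlib

section
/- For every integer n ≥ 2 and every integer r with 1 ≤ r ≤ n−1, the identity g(n,r) = (−1)^r · ( a·g(n−1,r) + b·g(n−1,r−1) ) holds in the free algebra K⟨a,b⟩. -/
/-!
Split every word by its first letter `x`. Prepending a letter shifts the positions of all later
letters by one, so the sign exponent of the word `x q` is `[x = b] + s(q) + (number of b's in q)`;
since `q` has `r` resp. `r - 1` letters `b` according as `x = a` or `x = b`, the extra sign is
`(-1)^r` in both cases.
-/

/-- `g K n r` is the signed sum `∑_p (-1)^{s(p)} p` over all words `p` of length `n`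
in the two letters `a = ι 0`, `b = ι 1` of the free algebra `K⟨a,b⟩` containing exactly
`n - r` letters `a` and `r` letters `b`, where `s(p) = ∑_{j : α_j = b} j`
(positions indexed from 1). -/
noncomputable def g (K : Type*) [Field K] (n r : ℕ) : FreeAlgebra K (Fin 2) :=
  ∑ p ∈ Finset.univ.filter
      (fun p : Fin n → Fin 2 => (Finset.univ.filter (fun i => p i = 1)).card = r),
    ((-1 : K) ^ (∑ i ∈ Finset.univ.filter (fun i => p i = 1), ((i : ℕ) + 1))) •
      (List.ofFn (fun i => FreeAlgebra.ι K (p i))).prod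

open Finset

section Cons

variable {α : Type*} [DecidableEq α] {m : ℕ} (x c : α) (q : Fin m → α)

lemma card_filter_cons_eq :
    #{i | Fin.cons (α := fun _ => α) x q i = c} = (if x = c then 1 else 0) + #{i | q i = c} := by
  simp only [card_filter, Fin.sum_univ_succ, Fin.cons_zero, Fin.cons_succ]

lemma sum_filter_cons_eq_val_succ :
    ∑ i ∈ {i | Fin.cons (α := fun _ => α) x q i = c}, ((i : ℕ) + 1) =
      (if x = c then 1 else 0) + ∑ i ∈ {i | q i = c}, ((i : ℕ) + 1) + #{i | q i = c} := by
  simp only [sum_filter, card_filter, Fin.sum_univ_succ, Fin.cons_zero, Fin.cons_succ,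
    Fin.val_zero, Fin.val_succ, add_assoc, ← sum_add_distrib]
  congr 1
  exact sum_congr rfl fun i _ => by split_ifs <;> rfl

omit [DecidableEq α] in
lemma prod_ofFn_cons {M : Type*} [Monoid M] (f : α → M) :
    (List.ofFn fun i => f (Fin.cons (α := fun _ => α) x q i)).prod =
      f x * (List.ofFn fun i => f (q i)).prod := by
  simp [List.ofFn_succ]

end Cons

lemma g_succ_succ (K : Type*) [Field K] (m r : ℕ) :
    g K (m + 1) (r + 1) = ((-1 : K) ^ (r + 1)) •
      (FreeAlgebra.ι K 0 * g K m (r + 1) + FreeAlgebra.ι K 1 * g K m r) := by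
  unfold g
  rw [sum_filter, ← (Fin.consEquiv fun _ => Fin 2).sum_comp, Fintype.sum_prod_type,
    Fin.sum_univ_two, smul_add, mul_sum, mul_sum, smul_sum, smul_sum, sum_filter, sum_filter]
  simp only [Fin.consEquiv_apply, card_filter_cons_eq, sum_filter_cons_eq_val_succ,
    prod_ofFn_cons]
  congr 1 <;> refine sum_congr rfl fun q _ => ?_
  · simp only [zero_ne_one, if_false, zero_add]
    split_ifs with h
    · rw [h, mul_smul_comm, smul_smul, ← pow_add, add_comm (r + 1)]
    · rfl
  · simp only [if_true, add_comm 1 #{i | q i = 1}, Nat.add_right_cancel_iff]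
    split_ifs with h
    · rw [h, mul_smul_comm, smul_smul, ← pow_add]
      congr 2
      ring
    · rfl

theorem g_eq_left_mul_general (K : Type*) [Field K] (n r : ℕ) (hn : 2 ≤ n)
    (hr1 : 1 ≤ r) :
    g K n r =
      ((-1 : K) ^ r) •
        (FreeAlgebra.ι K 0 * g K (n - 1) r + FreeAlgebra.ι K 1 * g K (n - 1) (r - 1)) := by
  obtain ⟨m, rfl⟩ : ∃ m, n = m + 1 := ⟨n - 1, by omega⟩
  obtain ⟨s, rfl⟩ : ∃ s, r = s + 1 := ⟨r - 1, by omega⟩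
  exact g_succ_succ K m s

/-- For every `n ≥ 2` and `1 ≤ r ≤ n - 1`, one has
`g(n,r) = (-1)^r · (a·g(n-1,r) + b·g(n-1,r-1))` in `K⟨a,b⟩`. -/
theorem g_eq_left_mul (K : Type*) [Field K] (n r : ℕ) (hn : 2 ≤ n)
    (hr1 : 1 ≤ r) (hr2 : r ≤ n - 1) :
    g K n r =
      ((-1 : K) ^ r) •
        (FreeAlgebra.ι K 0 * g K (n - 1) r + FreeAlgebra.ι K 1 * g K (n - 1) (r - 1)) :=
  g_eq_left_mul_general K n r hn hr1
end

section
/- The resolution (P•, d•) is minimal: for every n ≥ 1 the image of dⁿ : Pⁿ → Pⁿ⁻¹ is contained in J·Pⁿ⁻¹ + Pⁿ⁻¹·J, where J is the two-sided ideal of 𝒜 generated by the images of a, b, c (which is the Jacobson radical of 𝒜). -/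
/-!
Every entry of the matrix of `dⁿ⁺¹` is a signed sum of elementary tensors `x ⊗ y` with `x` or `y`
among `a, b, c`, so it lies in the ideal `J ⊗ 𝒜ᵒᵖ + 𝒜 ⊗ Jᵒᵖ` of `𝒜ᵉ`; and it is fixed on the right
by the idempotent `ε_s` generating its target summand `𝒜ᵉ ε_s` of `Pⁿ`. Since
`(j ⊗ 1) ε_s = j · ε_s` and `(1 ⊗ j) ε_s = ε_s · j`, any `x ε_s` with `x` in that ideal lies in
`J·Pⁿ + Pⁿ·J`.
-/

set_option synthInstance.maxHeartbeats 1000000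
set_option maxHeartbeats 1000000

open TensorProduct MulOpposite

variable (K : Type*) [Field K]

inductive Arel : FreeAlgebra K (Fin 4) → FreeAlgebra K (Fin 4) → Prop
  | ee : Arel (FreeAlgebra.ι K 0 * FreeAlgebra.ι K 0) (FreeAlgebra.ι K 0)
  | ea : Arel (FreeAlgebra.ι K 0 * FreeAlgebra.ι K 1) (FreeAlgebra.ι K 1)
  | ae : Arel (FreeAlgebra.ι K 1 * FreeAlgebra.ι K 0) (FreeAlgebra.ι K 1)
  | eb : Arel (FreeAlgebra.ι K 0 * FreeAlgebra.ι K 2) (FreeAlgebra.ι K 2)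
  | be : Arel (FreeAlgebra.ι K 2 * FreeAlgebra.ι K 0) (FreeAlgebra.ι K 2)
  | ec : Arel (FreeAlgebra.ι K 0 * FreeAlgebra.ι K 3) (FreeAlgebra.ι K 3)
  | ce : Arel (FreeAlgebra.ι K 3 * FreeAlgebra.ι K 0) 0
  | aa : Arel (FreeAlgebra.ι K 1 * FreeAlgebra.ι K 1) 0
  | bb : Arel (FreeAlgebra.ι K 2 * FreeAlgebra.ι K 2) 0
  | ab : Arel (FreeAlgebra.ι K 1 * FreeAlgebra.ι K 2) (FreeAlgebra.ι K 2 * FreeAlgebra.ι K 1)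
  | ac : Arel (FreeAlgebra.ι K 1 * FreeAlgebra.ι K 3) 0

abbrev Aalg := RingQuot (Arel K)

noncomputable def eA : Aalg K := RingQuot.mkAlgHom K (Arel K) (FreeAlgebra.ι K 0)
noncomputable def aA : Aalg K := RingQuot.mkAlgHom K (Arel K) (FreeAlgebra.ι K 1)
noncomputable def bA : Aalg K := RingQuot.mkAlgHom K (Arel K) (FreeAlgebra.ι K 2)
noncomputable def cA : Aalg K := RingQuot.mkAlgHom K (Arel K) (FreeAlgebra.ι K 3)

abbrev Env := (Aalg K) ⊗[K] (Aalg K)ᵐᵒᵖ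

noncomputable def el (x y : Aalg K) : Env K := x ⊗ₜ[K] (op y)

noncomputable instance : Module (Env K) (Aalg K) := TensorProduct.Algebra.module

noncomputable def epsP (n : ℕ) : Fin (n + 2) → Env K := fun r =>
  if n = 0 then (if (r : ℕ) = 0 then el K (eA K) (eA K)
      else el K (1 - eA K) (1 - eA K))
  else (if (r : ℕ) = n + 1 then el K (eA K) (1 - eA K) else el K (eA K) (eA K))

noncomputable def P (n : ℕ) : Submodule (Env K) (Fin (n + 2) → Env K) where
  carrier := {f | ∀ r, f r * epsP K n r = f r}
  add_mem' := by
    intro f g hf hg r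
    simp only [Pi.add_apply, add_mul, hf r, hg r]
  zero_mem' := by
    intro r
    simp
  smul_mem' := by
    intro c f hf r
    simp only [Pi.smul_apply, smul_eq_mul, mul_assoc, hf r]

/-- The value of the differential `dⁿ` (for `n ≥ 1`) on the generator `e ⊗_r e`
(resp. `e ⊗_{n+1} (1-e)`) of the `r`-th summand of `Pⁿ`, written as an element of the
free module `(𝒜ᵉ)^{n+1}` containing `Pⁿ⁻¹`; an elementary bimodule tensor `x ⊗_s y`
corresponds to `el x y` in coordinate `s`.  This encodes:
`d¹(e ⊗_0 e) = e ⊗_0 a - a ⊗_0 e`, `d¹(e ⊗_1 e) = -e ⊗_0 b + b ⊗_0 e`,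
`d¹(e ⊗_2 (1-e)) = e ⊗_0 c - c ⊗_1 (1-e)`, and for `n ≥ 2`:
`dⁿ(e ⊗_0 e) = e ⊗_0 a + (-1)ⁿ a ⊗_0 e`,
`dⁿ(e ⊗_r e) = e ⊗_r a + (-1)ⁿ e ⊗_{r-1} b + (-1)^{r+n}(a ⊗_r e + b ⊗_{r-1} e)`
for `1 ≤ r ≤ n-1`,
`dⁿ(e ⊗_n e) = (-1)ⁿ e ⊗_{n-1} b + b ⊗_{n-1} e`,
`dⁿ(e ⊗_{n+1} (1-e)) = e ⊗_0 c + (-1)ⁿ a ⊗_n (1-e)`. -/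
noncomputable def vmat (n : ℕ) (r : Fin (n + 2)) : Fin (n + 1) → Env K := fun s =>
  if (r : ℕ) = n + 1 then
    (if (s : ℕ) = 0 then el K (eA K) (cA K) else 0) +
      (if (s : ℕ) = n then
        (-1 : Env K) ^ n * el K (if n = 1 then cA K else aA K) (1 - eA K) else 0)
  else if (r : ℕ) = n then
    (if (s : ℕ) + 1 = n then
      (-1 : Env K) ^ n * el K (eA K) (bA K) + el K (bA K) (eA K) else 0)
  else if (r : ℕ) = 0 then
    (if (s : ℕ) = 0 then el K (eA K) (aA K) + (-1 : Env K) ^ n * el K (aA K) (eA K) else 0)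
  else
    (if (s : ℕ) = (r : ℕ) then
      el K (eA K) (aA K) + (-1 : Env K) ^ ((r : ℕ) + n) * el K (aA K) (eA K) else 0) +
    (if (s : ℕ) + 1 = (r : ℕ) then
      (-1 : Env K) ^ n * el K (eA K) (bA K) +
        (-1 : Env K) ^ ((r : ℕ) + n) * el K (bA K) (eA K) else 0)

/-- The differential `dⁿ : Pⁿ → Pⁿ⁻¹` for `n ≥ 1`, as an `𝒜ᵉ`-linear (i.e. bimodule) map
defined on the ambient free module. -/
noncomputable def D (n : ℕ) : (Fin (n + 2) → Env K) →ₗ[Env K] (Fin (n + 1) → Env K) where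
  toFun f := ∑ r, f r • vmat K n r
  map_add' f g := by
    simp [add_smul, Finset.sum_add_distrib]
  map_smul' c f := by
    simp [mul_smul, Finset.smul_sum]
    exact Finset.sum_congr rfl fun x _ => by ext i; simp [mul_assoc]

/-- The multiplication map `d⁰ : P⁰ → 𝒜`, `x ⊗ y ↦ xy`, as an `𝒜ᵉ`-linear map
defined on the ambient free module (the generator `e ⊗_0 e` is sent to `e·e = e`
and `(1-e) ⊗_1 (1-e)` to `(1-e)·(1-e) = 1-e`). -/
noncomputable def D0 : (Fin 2 → Env K) →ₗ[Env K] Aalg K where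
  toFun f := f 0 • eA K + f 1 • (1 - eA K)
  map_add' f g := by
    simp only [Pi.add_apply, add_smul]
    abel
  map_smul' c f := by
    simp [mul_smul]

/-- The two-sided ideal `J` of `𝒜` generated by (the images of) `a`, `b`, `c`
(the Jacobson radical of `𝒜`), realised as the `𝒜ᵉ`-submodule of `𝒜` spanned by
`a`, `b`, `c` (the `𝒜ᵉ`-action provides multiplication on both sides). -/
noncomputable def Jrad : Submodule (Env K) (Aalg K) :=
  Submodule.span (Env K) {aA K, bA K, cA K}

/-- The sub-bimodule `J·Pⁿ + Pⁿ·J` of `Pⁿ`, generated by all elements `j·x` and `x·j`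
with `j ∈ J` and `x ∈ Pⁿ` (`j·x = (j ⊗ 1ᵒᵖ) • x` and `x·j = (1 ⊗ jᵒᵖ) • x`). -/
noncomputable def radP (n : ℕ) : Submodule (Env K) (Fin (n + 2) → Env K) :=
  Submodule.span (Env K)
    {z | ∃ j ∈ Jrad K, ∃ x ∈ P K n, z = el K j 1 • x ∨ z = el K 1 j • x}

lemma el_mul_el (x y z w : Aalg K) : el K x y * el K z w = el K (x * z) (w * y) := by
  simp [el, Algebra.TensorProduct.tmul_mul_tmul, ← op_mul]

lemma eA_mul_eA : eA K * eA K = eA K := by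
  rw [eA, ← map_mul]; exact RingQuot.mkAlgHom_rel K Arel.ee

lemma eA_mul_aA : eA K * aA K = aA K := by
  rw [eA, aA, ← map_mul]; exact RingQuot.mkAlgHom_rel K Arel.ea

lemma aA_mul_eA : aA K * eA K = aA K := by
  rw [eA, aA, ← map_mul]; exact RingQuot.mkAlgHom_rel K Arel.ae

lemma eA_mul_bA : eA K * bA K = bA K := by
  rw [eA, bA, ← map_mul]; exact RingQuot.mkAlgHom_rel K Arel.eb

lemma bA_mul_eA : bA K * eA K = bA K := by
  rw [eA, bA, ← map_mul]; exact RingQuot.mkAlgHom_rel K Arel.be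

lemma eA_mul_cA : eA K * cA K = cA K := by
  rw [eA, cA, ← map_mul]; exact RingQuot.mkAlgHom_rel K Arel.ec

lemma cA_mul_eA : cA K * eA K = 0 := by
  rw [eA, cA, ← map_mul, ← map_zero (RingQuot.mkAlgHom K (Arel K))]
  exact RingQuot.mkAlgHom_rel K Arel.ce

lemma one_sub_eA_mul_self : (1 - eA K) * (1 - eA K) = 1 - eA K :=
  (IsIdempotentElem.one_sub (eA_mul_eA K)).eq

lemma cA_mul_one_sub_eA : cA K * (1 - eA K) = cA K := by
  rw [mul_sub, mul_one, cA_mul_eA, sub_zero]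

lemma epsP_of_le {n : ℕ} {s : Fin (n + 2)} (h : (s : ℕ) ≤ n) :
    epsP K n s = el K (eA K) (eA K) := by
  unfold epsP
  split_ifs <;> first | rfl | omega

lemma epsP_mul_self (n : ℕ) (s : Fin (n + 2)) : epsP K n s * epsP K n s = epsP K n s := by
  unfold epsP
  split_ifs <;> simp only [el_mul_el, eA_mul_eA, one_sub_eA_mul_self]

lemma single_epsP_mem_P (n : ℕ) (s : Fin (n + 2)) : Pi.single s (epsP K n s) ∈ P K n := by
  intro r
  rcases eq_or_ne r s with rfl | h
  · simp [epsP_mul_self]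
  · simp [Pi.single_eq_of_ne h]

/-- The two-sided ideal `J ⊗ 𝒜ᵒᵖ + 𝒜 ⊗ Jᵒᵖ` of `𝒜ᵉ`. -/
noncomputable def radEnv : Ideal (Env K) :=
  Ideal.span {z | ∃ j ∈ Jrad K, z = el K j 1 ∨ z = el K 1 j}

lemma el_mem_radEnv_of_left {j : Aalg K} (hj : j ∈ Jrad K) (y : Aalg K) :
    el K j y ∈ radEnv K := by
  have : el K j y = el K 1 y * el K j 1 := by simp [el_mul_el]
  rw [this]
  exact Ideal.mul_mem_left _ _ (Ideal.subset_span ⟨j, hj, Or.inl rfl⟩)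

lemma el_mem_radEnv_of_right (x : Aalg K) {j : Aalg K} (hj : j ∈ Jrad K) :
    el K x j ∈ radEnv K := by
  have : el K x j = el K x 1 * el K 1 j := by simp [el_mul_el]
  rw [this]
  exact Ideal.mul_mem_left _ _ (Ideal.subset_span ⟨j, hj, Or.inr rfl⟩)

lemma aA_mem_Jrad : aA K ∈ Jrad K := Submodule.subset_span (by simp)

lemma bA_mem_Jrad : bA K ∈ Jrad K := Submodule.subset_span (by simp)

lemma cA_mem_Jrad : cA K ∈ Jrad K := Submodule.subset_span (by simp)

lemma smul_single_epsP_mem_radP {n : ℕ} (s : Fin (n + 2)) {x : Env K} (hx : x ∈ radEnv K) :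
    x • Pi.single s (epsP K n s) ∈ radP K n := by
  let φ := LinearMap.toSpanSingleton (Env K) _ (Pi.single s (epsP K n s) : Fin (n + 2) → Env K)
  suffices radEnv K ≤ (radP K n).comap φ from this hx
  refine Submodule.span_le.mpr ?_
  rintro _ ⟨j, hj, rfl | rfl⟩
  all_goals exact Submodule.subset_span ⟨j, hj, _, single_epsP_mem_P K n s, by simp [φ]⟩

lemma mem_radP_of_forall {n : ℕ} (g : Fin (n + 2) → Env K)
    (h : ∀ s, g s ∈ radEnv K ∧ g s * epsP K n s = g s) : g ∈ radP K n := by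
  rw [← Finset.univ_sum_single g]
  refine Submodule.sum_mem _ fun s _ => ?_
  have hs : Pi.single s (g s) = g s • Pi.single s (epsP K n s) := by
    conv_lhs => rw [← (h s).2, ← smul_eq_mul]
    exact Pi.single_smul' s (g s) (epsP K n s)
  exact hs ▸ smul_single_epsP_mem_radP K s (h s).1

lemma vmat_apply_mem_radEnv (n : ℕ) (r : Fin (n + 3)) (s : Fin (n + 2)) :
    vmat K (n + 1) r s ∈ radEnv K := by
  have ha := aA_mem_Jrad K
  have hb := bA_mem_Jrad K
  have hc := cA_mem_Jrad K
  unfold vmat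
  split_ifs <;>
    repeat' first
      | exact Ideal.zero_mem _
      | apply Ideal.add_mem
      | apply Ideal.mul_mem_left
      | exact el_mem_radEnv_of_left K ‹_› _
      | exact el_mem_radEnv_of_right K _ ‹_›

lemma vmat_apply_mul_epsP (n : ℕ) (r : Fin (n + 3)) (s : Fin (n + 2)) :
    vmat K (n + 1) r s * epsP K n s = vmat K (n + 1) r s := by
  rcases Nat.lt_succ_iff_lt_or_eq.mp s.isLt with hs | hs
  · rw [epsP_of_le K (by omega)]
    unfold vmat
    split_ifs <;> first | omega | simp only [add_mul, mul_assoc, zero_mul, el_mul_el,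
      eA_mul_eA, eA_mul_aA, aA_mul_eA, eA_mul_bA, bA_mul_eA, eA_mul_cA]
  · unfold vmat epsP
    split_ifs <;> first | omega | simp only [add_mul, mul_assoc, zero_mul, el_mul_el,
      one_sub_eA_mul_self, aA_mul_eA, cA_mul_one_sub_eA]

lemma D_apply (n : ℕ) (f : Fin (n + 2) → Env K) : D K n f = ∑ r, f r • vmat K n r := rfl

lemma vmat_mem_radP (n : ℕ) (r : Fin (n + 3)) : vmat K (n + 1) r ∈ radP K n :=
  mem_radP_of_forall K _ fun s => ⟨vmat_apply_mem_radEnv K n r s, vmat_apply_mul_epsP K n r s⟩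

/-- The resolution `(P•, d•)` is minimal: for every `n ≥ 1` the image of
`dⁿ : Pⁿ → Pⁿ⁻¹` is contained in `J·Pⁿ⁻¹ + Pⁿ⁻¹·J`, where `J` is the two-sided ideal
of `𝒜` generated by the images of `a`, `b`, `c`.
(Here `D K (n+1)` is `dⁿ⁺¹`.) -/
theorem resolution_minimal (K : Type*) [Field K] :
    ∀ n : ℕ, ∀ f ∈ P K (n + 1), D K (n + 1) f ∈ radP K n := by
  intro n f _
  rw [D_apply]
  exact Submodule.sum_mem _ fun r _ => Submodule.smul_mem _ _ (vmat_mem_radP K n r)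
end

section
/- Let K be a field and q ∈ K with q ≠ 0. Let Λ_q = K⟨x,y⟩/(x², xy + q·yx, y²). Then Λ_q is self-injective: Λ_q is injective as a (left) module over itself. -/
set_option synthInstance.maxHeartbeats 1000000
set_option maxHeartbeats 1000000

variable (K : Type*) [Field K]

/-- Relations defining `Λ_q = K⟨x,y⟩/(x², xy + q·yx, y²)`, with `x = ι 0`, `y = ι 1`. -/
inductive Lrel (q : K) : FreeAlgebra K (Fin 2) → FreeAlgebra K (Fin 2) → Prop
  | xx : Lrel q (FreeAlgebra.ι K 0 * FreeAlgebra.ι K 0) 0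
  | xy : Lrel q (FreeAlgebra.ι K 0 * FreeAlgebra.ι K 1 +
      q • (FreeAlgebra.ι K 1 * FreeAlgebra.ι K 0)) 0
  | yy : Lrel q (FreeAlgebra.ι K 1 * FreeAlgebra.ι K 1) 0

/-- The algebra `Λ_q` of Buchweitz–Green–Madsen–Solberg. -/
abbrev Lalg (q : K) := RingQuot (Lrel K q)

noncomputable def xL (q : K) : Lalg K q := RingQuot.mkAlgHom K (Lrel K q) (FreeAlgebra.ι K 0)
noncomputable def yL (q : K) : Lalg K q := RingQuot.mkAlgHom K (Lrel K q) (FreeAlgebra.ι K 1)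

/-!
`Λ_q` is a Frobenius algebra. It is spanned by `1, x, y, xy`, and the functional `λ` taking the
`xy`-coordinate is nondegenerate: if `λ (t * u) = 0` for `t = 1, x, y, xy`, then the four
coordinates of `u` vanish (`q ≠ 0` enters through `y * x = -q⁻¹ • x * y`).
For a finite-dimensional algebra `A` with such a functional, `u ↦ λ (· * u)` is an isomorphism
`A ≃ Dual K A`, and Baer's criterion follows: for an `A`-linear `g : I → A` on a left ideal,
extend `λ ∘ g` to a functional `λ (· * u)` on `A`; then
`λ (t * g i) = λ (g (t * i)) = λ (t * i * u)` for all `t`, so `g i = i * u`, and `g` extends to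
right multiplication by `u`.
-/

section Frobenius

variable {K A : Type*} [Field K] [Ring A] [Algebra K A] [FiniteDimensional K A]

theorem exists_eq_comp_mul_right_of_nondegenerate (φ : A →ₗ[K] K)
    (hφ : ∀ u : A, (∀ t, φ (t * u) = 0) → u = 0) (ψ : A →ₗ[K] K) :
    ∃ u : A, ∀ t, ψ t = φ (t * u) := by
  let Φ : A →ₗ[K] Module.Dual K A := (LinearMap.mul K A).flip.compr₂ φ
  have hΦ : Function.Injective Φ := by
    rw [injective_iff_map_eq_zero]
    exact fun u hu ↦ hφ u (LinearMap.congr_fun hu)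
  obtain ⟨u, hu⟩ :=
    (LinearMap.injective_iff_surjective_of_finrank_eq_finrank Subspace.dual_finrank_eq.symm).1
      hΦ ψ
  exact ⟨u, fun t ↦ (LinearMap.congr_fun hu t).symm⟩

theorem Module.Baer.of_nondegenerate (φ : A →ₗ[K] K)
    (hφ : ∀ u : A, (∀ t, φ (t * u) = 0) → u = 0) : Module.Baer A A := by
  intro I g
  obtain ⟨ψ, hψ⟩ :=
    LinearMap.exists_extend (p := I.restrictScalars K) (φ ∘ₗ g.restrictScalars K)
  obtain ⟨u, hu⟩ := exists_eq_comp_mul_right_of_nondegenerate φ hφ ψ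
  refine ⟨LinearMap.toSpanSingleton A A u, fun i hi ↦ ?_⟩
  suffices i * u - g ⟨i, hi⟩ = 0 from sub_eq_zero.1 this
  refine hφ _ fun t ↦ ?_
  have hg : t * g ⟨i, hi⟩ = g ⟨t * i, I.mul_mem_left t hi⟩ := (g.map_smul t _).symm
  have hψ_apply : ψ (t * i) = φ (g ⟨t * i, I.mul_mem_left t hi⟩) :=
    LinearMap.congr_fun hψ ⟨t * i, I.mul_mem_left t hi⟩
  rw [mul_sub, map_sub, hg, ← hψ_apply, hu, mul_assoc, sub_self]

end Frobenius

section Lalg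

variable {K} {q : K}

@[simp] theorem xL_mul_xL : xL K q * xL K q = 0 := by
  simpa [xL] using RingQuot.mkAlgHom_rel K (Lrel.xx (K := K) (q := q))

@[simp] theorem yL_mul_yL : yL K q * yL K q = 0 := by
  simpa [yL] using RingQuot.mkAlgHom_rel K (Lrel.yy (K := K) (q := q))

theorem xL_mul_yL_add_smul : xL K q * yL K q + q • (yL K q * xL K q) = 0 := by
  simpa [xL, yL] using RingQuot.mkAlgHom_rel K (Lrel.xy (K := K) (q := q))

@[simp] theorem yL_mul_xL (hq : q ≠ 0) : yL K q * xL K q = -q⁻¹ • (xL K q * yL K q) := by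
  have h := xL_mul_yL_add_smul (q := q)
  rw [add_eq_zero_iff_neg_eq, ← inv_smul_eq_iff₀ hq] at h
  rw [← h, smul_neg, ← neg_smul]

@[simp] theorem xL_mul_xL_mul (w : Lalg K q) : xL K q * (xL K q * w) = 0 := by
  rw [← mul_assoc, xL_mul_xL, zero_mul]

@[simp] theorem yL_mul_xL_mul (hq : q ≠ 0) (w : Lalg K q) :
    yL K q * (xL K q * w) = -q⁻¹ • (xL K q * (yL K q * w)) := by
  rw [← mul_assoc, yL_mul_xL hq, smul_mul_assoc, mul_assoc]

noncomputable def monomial (q : K) : Fin 4 → Lalg K q := ![1, xL K q, yL K q, xL K q * yL K q]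

theorem span_monomial_mul_le (hq : q ≠ 0) :
    Submodule.span K (Set.range (monomial q)) * Submodule.span K (Set.range (monomial q)) ≤
      Submodule.span K (Set.range (monomial q)) := by
  rw [Submodule.span_mul_span, Submodule.span_le]
  rintro _ ⟨_, ⟨i, rfl⟩, _, ⟨j, rfl⟩, rfl⟩
  -- each product of two monomials is `0` or a scalar multiple of a monomial
  fin_cases i <;> fin_cases j <;>
    simp [monomial, mul_assoc, hq] <;>
    first
      | (apply Submodule.smul_mem; apply Submodule.subset_span; simp)
      | (apply Submodule.subset_span; simp)

theorem span_monomial_eq_top (hq : q ≠ 0) : Submodule.span K (Set.range (monomial q)) = ⊤ := by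
  let B : Subalgebra K (Lalg K q) := (Submodule.span K (Set.range (monomial q))).toSubalgebra
    (Submodule.subset_span ⟨0, rfl⟩)
    (fun _ _ hu hv ↦ span_monomial_mul_le hq (Submodule.mul_mem_mul hu hv))
  rw [eq_top_iff]
  rintro w -
  obtain ⟨a, rfl⟩ := RingQuot.mkAlgHom_surjective K (Lrel K q) w
  change _ ∈ B
  induction a using FreeAlgebra.induction with
  | grade0 r => rw [AlgHom.commutes]; exact B.algebraMap_mem r
  | grade1 i =>
    fin_cases i
    · exact Submodule.subset_span ⟨1, rfl⟩
    · exact Submodule.subset_span ⟨2, rfl⟩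
  | mul a b ha hb => rw [map_mul]; exact B.mul_mem ha hb
  | add a b ha hb => rw [map_add]; exact B.add_mem ha hb

theorem finiteDimensional_Lalg (hq : q ≠ 0) : FiniteDimensional K (Lalg K q) :=
  Module.finite_def.2 <| span_monomial_eq_top hq ▸ Submodule.fg_span (Set.finite_range _)

/- Left multiplication by `x` and by `y` on `Λ_q`, in the basis `1, x, y, xy`. -/
def xMatrix : Matrix (Fin 4) (Fin 4) K := !![0, 0, 0, 0; 1, 0, 0, 0; 0, 0, 0, 0; 0, 0, 1, 0]

def yMatrix (q : K) : Matrix (Fin 4) (Fin 4) K :=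
  !![0, 0, 0, 0; 0, 0, 0, 0; 1, 0, 0, 0; 0, -q⁻¹, 0, 0]

theorem xMatrix_mul_xMatrix : xMatrix (K := K) * xMatrix = 0 := by
  ext i j; fin_cases i <;> fin_cases j <;> simp [xMatrix]

theorem yMatrix_mul_yMatrix : yMatrix q * yMatrix q = 0 := by
  ext i j; fin_cases i <;> fin_cases j <;> simp [yMatrix]

theorem xMatrix_mul_yMatrix_add_smul (hq : q ≠ 0) :
    xMatrix * yMatrix q + q • (yMatrix q * xMatrix) = 0 := by
  ext i j; fin_cases i <;> fin_cases j <;> simp [xMatrix, yMatrix, hq]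

noncomputable def regularRep (hq : q ≠ 0) : Lalg K q →ₐ[K] Matrix (Fin 4) (Fin 4) K :=
  RingQuot.liftAlgHom K ⟨FreeAlgebra.lift K ![xMatrix, yMatrix q], fun _ _ h ↦ by
    cases h <;> simp [xMatrix_mul_xMatrix, yMatrix_mul_yMatrix, xMatrix_mul_yMatrix_add_smul hq]⟩

theorem regularRep_xL (hq : q ≠ 0) : regularRep hq (xL K q) = xMatrix := by
  simp [regularRep, xL]

theorem regularRep_yL (hq : q ≠ 0) : regularRep hq (yL K q) = yMatrix q := by
  simp [regularRep, yL]

/-- The `xy`-coordinate, read off as the last coordinate of `w · 1`. -/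
noncomputable def coeffXY (hq : q ≠ 0) : Lalg K q →ₗ[K] K :=
  Matrix.entryLinearMap K K 3 0 ∘ₗ (regularRep hq).toLinearMap

@[simp] theorem coeffXY_one (hq : q ≠ 0) : coeffXY hq 1 = 0 := by
  simp [coeffXY]

@[simp] theorem coeffXY_xL (hq : q ≠ 0) : coeffXY hq (xL K q) = 0 := by
  simp [coeffXY, regularRep_xL, xMatrix]

@[simp] theorem coeffXY_yL (hq : q ≠ 0) : coeffXY hq (yL K q) = 0 := by
  simp [coeffXY, regularRep_yL, yMatrix]

@[simp] theorem coeffXY_xL_mul_yL (hq : q ≠ 0) : coeffXY hq (xL K q * yL K q) = 1 := by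
  simp [coeffXY, regularRep_xL, regularRep_yL, xMatrix, yMatrix]

theorem coeffXY_nondegenerate (hq : q ≠ 0) (u : Lalg K q)
    (hu : ∀ t, coeffXY hq (t * u) = 0) : u = 0 := by
  have hu_span : u ∈ Submodule.span K (Set.range (monomial q)) :=
    span_monomial_eq_top hq ▸ Submodule.mem_top
  obtain ⟨c, rfl⟩ := (Submodule.mem_span_range_iff_exists_fun K).1 hu_span
  have h3 : c 3 = 0 := by simpa [Fin.sum_univ_four, monomial, hq] using hu 1
  have h2 : c 2 = 0 := by
    simpa [Fin.sum_univ_four, monomial, mul_add, mul_assoc, hq] using hu (xL K q)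
  have h1 : c 1 = 0 := by
    simpa [Fin.sum_univ_four, monomial, mul_add, mul_assoc, hq] using hu (yL K q)
  have h0 : c 0 = 0 := by
    simpa [Fin.sum_univ_four, monomial, mul_add, mul_assoc, hq] using hu (xL K q * yL K q)
  simp [Fin.sum_univ_four, h0, h1, h2, h3]

end Lalg

/-- For `q ≠ 0`, the algebra `Λ_q` is self-injective: `Λ_q` is injective as a (left)
module over itself. -/
theorem Lalg_selfInjective (K : Type*) [Field K] (q : K) (hq : q ≠ 0) :
    Module.Injective (Lalg K q) (Lalg K q) :=
  haveI := finiteDimensional_Lalg hq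
  (Module.Baer.of_nondegenerate (coeffXY hq) (coeffXY_nondegenerate hq)).injective
end
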